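/- Let A be a strongly Γ-graded ring. Then every finitely generated graded projective A-module is a graded direct summand of a free graded module A(0)^m with trivial shifts, for some m. -/

import Mathlib

/-!
Strong grading gives, for every shift `α`, a decomposition `1 = ∑ⱼ aⱼ bⱼ` with
`aⱼ ∈ A_{-α}` and `bⱼ ∈ A_α`. Then `x ↦ (x aⱼ)ⱼ` and `(yⱼ)ⱼ ↦ ∑ⱼ yⱼ bⱼ` exhibit `A(α)` as a
graded direct summand of `A(0)ⁿ`; composing these, coordinatewise, with the given splitting
of `P` off `⊕ᵢ A(αᵢ)` removes all shifts.
-/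

open Pointwise

universe u

theorem AddSubgroup.exists_fin_sum_mul_eq_of_mem_closure_mul {R : Type*}
    [NonUnitalNonAssocRing R] {S T : AddSubgroup R} {z : R}
    (hz : z ∈ AddSubgroup.closure ((S : Set R) * (T : Set R))) :
    ∃ (n : ℕ) (a b : Fin n → R), (∀ j, a j ∈ S) ∧ (∀ j, b j ∈ T) ∧ ∑ j, a j * b j = z := by
  induction hz using AddSubgroup.closure_induction with
  | mem x hx =>
    obtain ⟨s, hs, t, ht, rfl⟩ := hx
    exact ⟨1, fun _ => s, fun _ => t, fun _ => hs, fun _ => ht, by simp⟩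
  | zero => exact ⟨0, Fin.elim0, Fin.elim0, nofun, nofun, by simp⟩
  | add x y _ _ hx hy =>
    obtain ⟨n₁, a₁, b₁, ha₁, hb₁, rfl⟩ := hx
    obtain ⟨n₂, a₂, b₂, ha₂, hb₂, rfl⟩ := hy
    refine ⟨n₁ + n₂, Fin.append a₁ a₂, Fin.append b₁ b₂, Fin.addCases ?_ ?_, Fin.addCases ?_ ?_,
      by simp [Fin.sum_univ_add]⟩ <;> simp [*]
  | neg x _ hx =>
    obtain ⟨n, a, b, ha, hb, rfl⟩ := hx
    exact ⟨n, fun j => -a j, b, fun j => neg_mem (ha j), hb, by simp⟩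

namespace GradedShift

variable {ι : Type*} {κ : ι → Type*} {A : Type*} [Ring A]
  {Γ : Type*} [AddCommGroup Γ] (𝒜 : Γ → AddSubgroup A) [SetLike.GradedMonoid 𝒜] {w : ι → Γ}

def unshift (a : ∀ i, κ i → A) : (ι → A) →ₗ[A] (Σ i, κ i) → A :=
  LinearMap.pi fun p => LinearMap.toSpanSingleton A A (a p.1 p.2) ∘ₗ LinearMap.proj p.1

@[simp]
theorem unshift_apply (a : ∀ i, κ i → A) (v : ι → A) (p : Σ i, κ i) :
    unshift a v p = v p.1 * a p.1 p.2 :=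
  rfl

theorem unshift_mem {a : ∀ i, κ i → A} (ha : ∀ i j, a i j ∈ 𝒜 (-w i)) {lam : Γ} {v : ι → A}
    (hv : ∀ i, v i ∈ 𝒜 (w i + lam)) (p : Σ i, κ i) : unshift a v p ∈ 𝒜 lam := by
  simpa using SetLike.mul_mem_graded (hv p.1) (ha p.1 p.2)

variable [∀ i, Fintype (κ i)]

def reshift (b : ∀ i, κ i → A) : ((Σ i, κ i) → A) →ₗ[A] ι → A :=
  LinearMap.pi fun i => ∑ j, LinearMap.toSpanSingleton A A (b i j) ∘ₗ LinearMap.proj ⟨i, j⟩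

@[simp]
theorem reshift_apply (b : ∀ i, κ i → A) (u : (Σ i, κ i) → A) (i : ι) :
    reshift b u i = ∑ j, u ⟨i, j⟩ * b i j := by
  simp [reshift]

theorem reshift_mem {b : ∀ i, κ i → A} (hb : ∀ i j, b i j ∈ 𝒜 (w i)) {lam : Γ}
    {u : (Σ i, κ i) → A} (hu : ∀ p, u p ∈ 𝒜 lam) (i : ι) : reshift b u i ∈ 𝒜 (w i + lam) := by
  rw [reshift_apply, add_comm]
  exact AddSubgroup.sum_mem _ fun j _ => SetLike.mul_mem_graded (hu _) (hb i j)

theorem reshift_comp_unshift {a b : ∀ i, κ i → A} (hab : ∀ i, ∑ j, a i j * b i j = 1) :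
    reshift b ∘ₗ unshift a = LinearMap.id := by
  ext v i
  simp [mul_assoc, ← Finset.mul_sum, hab]

end GradedShift

open GradedShift in
theorem fg_graded_projective_summand_trivial_shifts_general
    {Γ : Type u} {A : Type u} [AddCommGroup Γ] [DecidableEq Γ] [Ring A]
    (𝒜 : Γ → AddSubgroup A) [GradedRing 𝒜]
    (hstrong : ∀ lam δ : Γ, AddSubgroup.closure ((𝒜 lam : Set A) * (𝒜 δ : Set A)) = 𝒜 (lam + δ))
    (P : Type u) [AddCommGroup P] [Module A P]
    (𝒬 : Γ → AddSubgroup P)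
    (hproj : ∃ (k : ℕ) (w : Fin k → Γ) (f : P →ₗ[A] (Fin k → A)) (g : (Fin k → A) →ₗ[A] P),
      (∀ lam : Γ, ∀ x ∈ 𝒬 lam, ∀ i : Fin k, f x i ∈ 𝒜 (w i + lam)) ∧
      (∀ lam : Γ, ∀ v : Fin k → A, (∀ i : Fin k, v i ∈ 𝒜 (w i + lam)) → g v ∈ 𝒬 lam) ∧
      g.comp f = LinearMap.id) :
    ∃ (m : ℕ) (f : P →ₗ[A] (Fin m → A)) (g : (Fin m → A) →ₗ[A] P),
      (∀ lam : Γ, ∀ x ∈ 𝒬 lam, ∀ i : Fin m, f x i ∈ 𝒜 lam) ∧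
      (∀ lam : Γ, ∀ v : Fin m → A, (∀ i : Fin m, v i ∈ 𝒜 lam) → g v ∈ 𝒬 lam) ∧
      g.comp f = LinearMap.id := by
  obtain ⟨k, w, f, g, hf, hg, hgf⟩ := hproj
  have one_mem_closure (i : Fin k) :
      (1 : A) ∈ AddSubgroup.closure ((𝒜 (-w i) : Set A) * (𝒜 (w i) : Set A)) := by
    rw [hstrong, neg_add_cancel]
    exact SetLike.one_mem_graded 𝒜
  choose n a b ha hb hab using fun i =>
    AddSubgroup.exists_fin_sum_mul_eq_of_mem_closure_mul (one_mem_closure i)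
  let reindex := LinearEquiv.funCongrLeft A A (Fintype.equivFin (Σ i, Fin (n i))).symm
  refine ⟨_, reindex.toLinearMap ∘ₗ unshift a ∘ₗ f, g ∘ₗ reshift b ∘ₗ reindex.symm.toLinearMap,
    fun lam x hx _ => unshift_mem 𝒜 ha (hf lam x hx) _,
    fun lam v hv => hg lam _ (reshift_mem 𝒜 hb fun _ => hv _), ?_⟩
  ext x
  simpa [← LinearMap.comp_apply (reshift b), reshift_comp_unshift hab] using
    LinearMap.congr_fun hgf x

/-- Let `A` be a strongly `Γ`-graded ring.  Every finitely generated graded projective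
`A`-module `P` — i.e. a graded direct summand of a finite graded free module `⊕ᵢ A(αᵢ)` —
is a graded direct summand of a finite free graded module `A(0)ᵐ` with trivial shifts.
Graded direct summand means: there are degree-preserving `A`-linear maps `f : P → F` and
`g : F → P` with `g ∘ f = id`, where the `λ`-component of `⊕ᵢ A(αᵢ)` is
`{v | ∀ i, v i ∈ A_{αᵢ+λ}}`. -/
theorem fg_graded_projective_summand_trivial_shifts
    {Γ : Type u} {A : Type u} [AddCommGroup Γ] [DecidableEq Γ] [Ring A]
    (𝒜 : Γ → AddSubgroup A) [GradedRing 𝒜]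
    (hstrong : ∀ lam δ : Γ, AddSubgroup.closure ((𝒜 lam : Set A) * (𝒜 δ : Set A)) = 𝒜 (lam + δ))
    (P : Type u) [AddCommGroup P] [Module A P]
    (𝒬 : Γ → AddSubgroup P) [SetLike.GradedSMul 𝒜 𝒬] [DirectSum.Decomposition 𝒬]
    (hproj : ∃ (k : ℕ) (w : Fin k → Γ) (f : P →ₗ[A] (Fin k → A)) (g : (Fin k → A) →ₗ[A] P),
      (∀ lam : Γ, ∀ x ∈ 𝒬 lam, ∀ i : Fin k, f x i ∈ 𝒜 (w i + lam)) ∧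
      (∀ lam : Γ, ∀ v : Fin k → A, (∀ i : Fin k, v i ∈ 𝒜 (w i + lam)) → g v ∈ 𝒬 lam) ∧
      g.comp f = LinearMap.id) :
    ∃ (m : ℕ) (f : P →ₗ[A] (Fin m → A)) (g : (Fin m → A) →ₗ[A] P),
      (∀ lam : Γ, ∀ x ∈ 𝒬 lam, ∀ i : Fin m, f x i ∈ 𝒜 lam) ∧
      (∀ lam : Γ, ∀ v : Fin m → A, (∀ i : Fin m, v i ∈ 𝒜 lam) → g v ∈ 𝒬 lam) ∧
      g.comp f = LinearMap.id :=
  fg_graded_projective_summand_trivial_shifts_general 𝒜 hstrong P 𝒬 hproj
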